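/- The trilinear form (R₁, R₂, R₃) ↦ ⟨B(R₁, R₂), R₃⟩ on algebraic curvature operators is symmetric in its three entries, where B is the polarization of Q(R) = R² + R^#. -/

import Mathlib

open Matrix

noncomputable section

/-! Model of Λ²ℝⁿ as the space of skew-symmetric n×n real matrices, via the
identification x∧y ↦ (u ↦ ⟨x,u⟩y - ⟨y,u⟩x), with inner product
⟨x∧y, z∧t⟩ = ⟨x,z⟩⟨y,t⟩ - ⟨x,t⟩⟨y,z⟩, i.e. ⟨A,B⟩ = (1/2) tr(AᵀB). -/

/-- Λ²ℝⁿ, modelled as skew-symmetric matrices. -/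
def sk (n : ℕ) : Submodule ℝ (Matrix (Fin n) (Fin n) ℝ) where
  carrier := {A | Aᵀ = -A}
  add_mem' := by
    intro a b ha hb
    simp only [Set.mem_setOf_eq] at *
    rw [Matrix.transpose_add, ha, hb, neg_add]
  zero_mem' := by simp
  smul_mem' := by
    intro c a ha
    simp only [Set.mem_setOf_eq] at *
    rw [Matrix.transpose_smul, ha, smul_neg]

theorem sk_mem {n : ℕ} {A : Matrix (Fin n) (Fin n) ℝ} : A ∈ sk n ↔ Aᵀ = -A := Iff.rfl

/-- The inner product on Λ²ℝⁿ induced by the standard one on ℝⁿ. -/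
def ip {n : ℕ} (A B : sk n) : ℝ := (∑ i, ∑ j, A.1 i j * B.1 i j) / 2

/-- The wedge product x∧y of two vectors of ℝⁿ, as an element of Λ²ℝⁿ. -/
def wedge {n : ℕ} (x y : Fin n → ℝ) : sk n :=
  ⟨Matrix.of fun i j => x i * y j - x j * y i, by
    rw [sk_mem]
    ext i j
    simp only [Matrix.transpose_apply, Matrix.of_apply, Matrix.neg_apply]
    ring⟩

/-- The Lie bracket on Λ²ℝⁿ ≅ so(n). -/
def br {n : ℕ} (A B : sk n) : sk n :=
  ⟨A.1 * B.1 - B.1 * A.1, by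
    have hA := A.2
    have hB := B.2
    rw [sk_mem] at *
    rw [Matrix.transpose_sub, Matrix.transpose_mul, Matrix.transpose_mul, hA, hB]
    simp only [Matrix.neg_mul, Matrix.mul_neg, neg_neg, neg_sub]⟩

/-- The i-th standard basis vector of ℝⁿ. -/
def stdVec (n : ℕ) (i : Fin n) : Fin n → ℝ := Pi.single i 1

/-- A symmetric endomorphism of Λ²ℝⁿ. -/
def IsSym {n : ℕ} (R : sk n →ₗ[ℝ] sk n) : Prop := ∀ A B, ip (R A) B = ip A (R B)

/-- The first Bianchi identity. -/
def Bianchi {n : ℕ} (R : sk n →ₗ[ℝ] sk n) : Prop :=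
  ∀ x y z t : Fin n → ℝ,
    ip (R (wedge x y)) (wedge z t) + ip (R (wedge z x)) (wedge y t)
      + ip (R (wedge y z)) (wedge x t) = 0

/-- The quadratic form η ↦ ⟨R^# η, η⟩ = -(1/2) ∑ᵢ ⟨[η, R([η, R(ωᵢ)])], ωᵢ⟩,
summed over the orthonormal basis (ωᵢⱼ = eᵢ∧eⱼ)_{i<j} of Λ²ℝⁿ. -/
def sharpForm {n : ℕ} (R : sk n →ₗ[ℝ] sk n) (η : sk n) : ℝ :=
  -(1 / 2) * ∑ i, ∑ j,
    if i < j then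
      ip (br η (R (br η (R (wedge (stdVec n i) (stdVec n j))))))
        (wedge (stdVec n i) (stdVec n j))
    else 0

/-- `S` is the sharp R^# of `R`: the symmetric operator whose quadratic form is
`sharpForm R`. -/
def IsSharp {n : ℕ} (R S : sk n →ₗ[ℝ] sk n) : Prop :=
  IsSym S ∧ ∀ η, ip (S η) η = sharpForm R η

/-- The Ricci tensor of a curvature operator. -/
def ric {n : ℕ} (R : sk n →ₗ[ℝ] sk n) (x y : Fin n → ℝ) : ℝ :=
  ∑ i, ip (R (wedge x (stdVec n i))) (wedge y (stdVec n i))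

/-- The inner product on endomorphisms of Λ²ℝⁿ induced by that of Λ²ℝⁿ. -/
def opIp {n : ℕ} (R S : sk n →ₗ[ℝ] sk n) : ℝ :=
  ∑ i, ∑ j,
    if i < j then
      ip (R (wedge (stdVec n i) (stdVec n j))) (S (wedge (stdVec n i) (stdVec n j)))
    else 0

/-- The polarization B(X,Y) = (1/2)(Q(X+Y) - Q(X) - Q(Y)) of Q(R) = R² + R^#, where
SX, SY, SXY denote the sharps of X, Y and X+Y respectively. -/
def Bpol {n : ℕ} (X Y SX SY SXY : sk n →ₗ[ℝ] sk n) : sk n →ₗ[ℝ] sk n :=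
  ((1 : ℝ) / 2) • (((X + Y) ∘ₗ (X + Y) + SXY) - (X ∘ₗ X + SX) - (Y ∘ₗ Y + SY))

/-! Expanding `Q(R₁ + R₂)` gives `B(R₁, R₂) = (R₁R₂ + R₂R₁)/2 + R₁ # R₂`, where the polarized
sharp `R₁ # R₂` comes from polarizing the quadratic form `-(1/2) tr(ad η ∘ R ∘ ad η ∘ R)`.
In the orthonormal basis `ω_{ij} = e_i ∧ e_j` of Λ²ℝⁿ the first part contributes
`(tr(R₁R₂R₃) + tr(R₂R₁R₃))/2` to `⟨B(R₁, R₂), R₃⟩`, which is symmetric by cyclicity of the trace.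
The second contributes `(1/2) ∑ c_{abd} c_{a'b'd'} (R₁)_{aa'} (R₂)_{bb'} (R₃)_{dd'}`, where
`c_{abd} = ⟨[ω_a, ω_b], ω_d⟩` are the structure constants of so(n); they are totally antisymmetric
because `ad` is skew for the inner product, and permuting the `Rᵢ` permutes the legs of both
copies of `c` in the same way, so the signs cancel. -/

section SumLt
variable {α M : Type*} [Fintype α] [LinearOrder α] [AddCommMonoid M]

lemma sum_ite_lt_eq_sum_subtype (g : α → α → M) :
    (∑ i, ∑ j, if i < j then g i j else 0) = ∑ p : {p : α × α // p.1 < p.2}, g p.1.1 p.1.2 := by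
  rw [← Finset.sum_product' (f := fun i j => if i < j then g i j else 0), ← Finset.sum_filter]
  exact Finset.sum_subtype _ (by simp) _

lemma sum_sum_eq_two_nsmul_sum_lt {g : α → α → M} (hsymm : ∀ i j, g j i = g i j)
    (hdiag : ∀ i, g i i = 0) :
    ∑ i, ∑ j, g i j = 2 • ∑ i, ∑ j, if i < j then g i j else 0 := by
  have hsplit : ∀ i j, g i j = (if i < j then g i j else 0) + if j < i then g j i else 0 := by
    intro i j
    rcases lt_trichotomy i j with h | rfl | h
    · simp [h, h.not_gt]
    · simp [hdiag]
    · simp [h, h.not_gt, hsymm]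
  calc ∑ i, ∑ j, g i j
      = (∑ i, ∑ j, if i < j then g i j else 0) + ∑ i, ∑ j, if j < i then g j i else 0 := by
        simp only [← Finset.sum_add_distrib, ← hsplit]
    _ = 2 • ∑ i, ∑ j, if i < j then g i j else 0 := by
        rw [Finset.sum_comm (f := fun i j => if j < i then g j i else 0), two_nsmul]

end SumLt

section ThetaContraction
variable {ι : Type*} [Fintype ι] (c : ι → ι → ι → ℝ)

def thetaContraction (X Y Z : Matrix ι ι ℝ) : ℝ :=
  ∑ u : ι × ι × ι, ∑ v : ι × ι × ι,
    c u.1 u.2.1 u.2.2 * c v.1 v.2.1 v.2.2 * (X u.1 v.1 * Y u.2.1 v.2.1 * Z u.2.2 v.2.2)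

lemma thetaContraction_rotate (hc : ∀ a b d, c a b d = c b d a) (X Y Z : Matrix ι ι ℝ) :
    thetaContraction c X Y Z = thetaContraction c Y Z X := by
  let e : ι × ι × ι ≃ ι × ι × ι :=
    ⟨fun u => (u.2.1, u.2.2, u.1), fun u => (u.2.2, u.1, u.2.1), fun _ => rfl, fun _ => rfl⟩
  refine Fintype.sum_equiv e _ _ fun u => Fintype.sum_equiv e _ _ fun v => ?_
  simp only [e, Equiv.coe_fn_mk, hc u.1, hc v.1]
  ring

lemma thetaContraction_swap (hc : ∀ a b d, c a b d = -c a d b) (X Y Z : Matrix ι ι ℝ) :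
    thetaContraction c X Y Z = thetaContraction c X Z Y := by
  let e : ι × ι × ι ≃ ι × ι × ι := (Equiv.refl ι).prodCongr (Equiv.prodComm ι ι)
  refine Fintype.sum_equiv e _ _ fun u => Fintype.sum_equiv e _ _ fun v => ?_
  simp only [e, Equiv.prodCongr_apply, Equiv.coe_refl, Equiv.prodComm_apply, Prod.map_fst,
    Prod.map_snd, id, Prod.fst_swap, Prod.snd_swap]
  rw [hc u.1, hc v.1]
  ring

def bpolForm (X Y Z : Matrix ι ι ℝ) : ℝ :=
  (Matrix.trace (X * Y * Z) + Matrix.trace (Y * X * Z) + thetaContraction c X Y Z) / 2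

lemma bpolForm_rotate (hc : ∀ a b d, c a b d = c b d a) (X Y Z : Matrix ι ι ℝ) :
    bpolForm c X Y Z = bpolForm c Y Z X := by
  rw [bpolForm, bpolForm, thetaContraction_rotate c hc, Matrix.trace_mul_cycle Y Z X,
    ← Matrix.trace_mul_cycle Y X Z]

lemma bpolForm_swap (hc : ∀ a b d, c a b d = -c a d b) (X Y Z : Matrix ι ι ℝ) :
    bpolForm c X Y Z = bpolForm c X Z Y := by
  rw [bpolForm, bpolForm, thetaContraction_swap c hc, Matrix.trace_mul_cycle X Z Y,
    ← Matrix.trace_mul_cycle X Y Z, add_comm (Matrix.trace (Y * X * Z))]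

end ThetaContraction

section SkewSymmetric
variable {n : ℕ}

lemma sk_apply_swap (A : sk n) (i j : Fin n) : A.1 j i = -A.1 i j := by
  simpa using congr_fun₂ (sk_mem.mp A.2) i j

lemma ip_comm (A B : sk n) : ip A B = ip B A := by
  simp only [ip, mul_comm]

lemma ip_add_left (A B C : sk n) : ip (A + B) C = ip A C + ip B C := by
  simp only [ip, Submodule.coe_add, Matrix.add_apply, add_mul, Finset.sum_add_distrib, add_div]

lemma ip_add_right (A B C : sk n) : ip A (B + C) = ip A B + ip A C := by
  rw [ip_comm, ip_add_left, ip_comm B, ip_comm C]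

lemma ip_smul_left (c : ℝ) (A B : sk n) : ip (c • A) B = c * ip A B := by
  simp only [ip, SetLike.val_smul, Matrix.smul_apply, smul_eq_mul, mul_assoc, ← Finset.mul_sum,
    mul_div_assoc]

lemma ip_neg_left (A B : sk n) : ip (-A) B = -ip A B := by
  simp only [ip, NegMemClass.coe_neg, Matrix.neg_apply, neg_mul, Finset.sum_neg_distrib, neg_div]

lemma ip_sub_left (A B C : sk n) : ip (A - B) C = ip A C - ip B C := by
  simp only [ip, Submodule.coe_sub, Matrix.sub_apply, sub_mul, Finset.sum_sub_distrib, sub_div]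

lemma ip_eq_neg_half_trace (A B : sk n) : ip A B = -(1 / 2) * Matrix.trace (A.1 * B.1) := by
  have h : ∀ i j, A.1 i j * B.1 j i = -(A.1 i j * B.1 i j) := fun i j => by
    rw [sk_apply_swap B, mul_neg]
  simp only [ip, Matrix.trace, Matrix.diag_apply, Matrix.mul_apply, h, Finset.sum_neg_distrib]
  ring

lemma br_comm (A B : sk n) : br A B = -br B A :=
  Subtype.ext (neg_sub _ _).symm

lemma br_add_left (A B C : sk n) : br (A + B) C = br A C + br B C :=
  Subtype.ext <| by simp only [br, Submodule.coe_add, add_mul, mul_add]; abel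

lemma br_add_right (A B C : sk n) : br A (B + C) = br A B + br A C :=
  Subtype.ext <| by simp only [br, Submodule.coe_add, add_mul, mul_add]; abel

lemma ip_br_left (η A B : sk n) : ip (br η A) B = -ip A (br η B) := by
  simp only [ip_eq_neg_half_trace, br, Matrix.sub_mul, Matrix.mul_sub, Matrix.trace_sub,
    Matrix.mul_assoc]
  rw [Matrix.trace_mul_comm η.1, ← Matrix.mul_assoc, ← Matrix.mul_assoc]
  ring

lemma ip_wedge (A : sk n) (x y : Fin n → ℝ) : ip A (wedge x y) = x ⬝ᵥ (A.1 *ᵥ y) := by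
  have hswap : ∑ i, ∑ j, A.1 i j * (x j * y i) = -∑ i, ∑ j, A.1 i j * (x i * y j) := by
    rw [Finset.sum_comm]
    simp only [← Finset.sum_neg_distrib]
    exact Finset.sum_congr rfl fun i _ => Finset.sum_congr rfl fun j _ => by
      rw [sk_apply_swap A]; ring
  simp only [ip, wedge, Matrix.of_apply, mul_sub, Finset.sum_sub_distrib]
  rw [hswap, sub_neg_eq_add, add_self_div_two]
  simp only [dotProduct, Matrix.mulVec, Finset.mul_sum, mul_left_comm]

abbrev IncPair (n : ℕ) := {p : Fin n × Fin n // p.1 < p.2}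

def wedgeBasis (p : IncPair n) : sk n := wedge (stdVec n p.1.1) (stdVec n p.1.2)

lemma ip_wedgeBasis (A : sk n) (p : IncPair n) : ip A (wedgeBasis p) = A.1 p.1.1 p.1.2 := by
  simp [wedgeBasis, ip_wedge, stdVec]

lemma ip_eq_sum_wedgeBasis (A B : sk n) :
    ip A B = ∑ p, ip A (wedgeBasis p) * ip B (wedgeBasis p) := by
  have hsum := sum_sum_eq_two_nsmul_sum_lt (g := fun i j => A.1 i j * B.1 i j)
    (fun i j => by simp only [sk_apply_swap A j, sk_apply_swap B j, neg_mul_neg])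
    (fun i => by simp [show A.1 i i = 0 by linarith [sk_apply_swap A i i]])
  simp only [ip_wedgeBasis, ← sum_ite_lt_eq_sum_subtype (fun i j => A.1 i j * B.1 i j)]
  rw [ip, hsum, two_nsmul, add_self_div_two]

def opMatrix (R : sk n →ₗ[ℝ] sk n) : Matrix (IncPair n) (IncPair n) ℝ :=
  Matrix.of fun q p => ip (R (wedgeBasis p)) (wedgeBasis q)

lemma opMatrix_apply (R : sk n →ₗ[ℝ] sk n) (q p : IncPair n) :
    opMatrix R q p = ip (R (wedgeBasis p)) (wedgeBasis q) := rfl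

lemma IsSym.ip_apply_wedgeBasis {R : sk n →ₗ[ℝ] sk n} (hR : IsSym R) (v : sk n) (q : IncPair n) :
    ip (R v) (wedgeBasis q) = ∑ r, ip v (wedgeBasis r) * opMatrix R r q := by
  rw [hR, ip_eq_sum_wedgeBasis]
  rfl

lemma IsSym.opMatrix_comp {X : sk n →ₗ[ℝ] sk n} (hX : IsSym X) (Y : sk n →ₗ[ℝ] sk n) :
    opMatrix (X ∘ₗ Y) = opMatrix X * opMatrix Y := by
  ext q p
  rw [opMatrix, Matrix.of_apply, LinearMap.comp_apply, hX, ip_eq_sum_wedgeBasis, Matrix.mul_apply]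
  refine Finset.sum_congr rfl fun r _ => ?_
  rw [mul_comm, hX, ip_comm]
  rfl

lemma IsSym.opMatrix_transpose {R : sk n →ₗ[ℝ] sk n} (hR : IsSym R) :
    (opMatrix R)ᵀ = opMatrix R := by
  ext p q
  simp only [Matrix.transpose_apply, opMatrix, Matrix.of_apply]
  rw [hR, ip_comm]

lemma opIp_eq_sum (R S : sk n →ₗ[ℝ] sk n) :
    opIp R S = ∑ p, ip (R (wedgeBasis p)) (S (wedgeBasis p)) :=
  sum_ite_lt_eq_sum_subtype _

lemma opIp_eq_trace (X Y : sk n →ₗ[ℝ] sk n) :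
    opIp X Y = Matrix.trace ((opMatrix X)ᵀ * opMatrix Y) := by
  simp only [opIp_eq_sum, Matrix.trace, Matrix.diag_apply, Matrix.mul_apply,
    Matrix.transpose_apply, opMatrix, Matrix.of_apply]
  exact Finset.sum_congr rfl fun p _ => ip_eq_sum_wedgeBasis _ _

lemma opIp_add_left (X Y Z : sk n →ₗ[ℝ] sk n) : opIp (X + Y) Z = opIp X Z + opIp Y Z := by
  simp only [opIp_eq_sum, LinearMap.add_apply, ip_add_left, Finset.sum_add_distrib]

lemma opIp_smul_left (c : ℝ) (X Y : sk n →ₗ[ℝ] sk n) : opIp (c • X) Y = c * opIp X Y := by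
  simp only [opIp_eq_sum, LinearMap.smul_apply, ip_smul_left, Finset.mul_sum]

lemma opIp_comp {X Y : sk n →ₗ[ℝ] sk n} (hX : IsSym X) (hY : IsSym Y) (Z : sk n →ₗ[ℝ] sk n) :
    opIp (X ∘ₗ Y) Z = Matrix.trace (opMatrix Y * opMatrix X * opMatrix Z) := by
  rw [opIp_eq_trace, hX.opMatrix_comp, Matrix.transpose_mul, hX.opMatrix_transpose,
    hY.opMatrix_transpose]

/-- `-(1/2) tr (ad η ∘ A ∘ ad ζ ∘ B)` -/
def sharpPairing (A B : sk n →ₗ[ℝ] sk n) (η ζ : sk n) : ℝ :=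
  -(1 / 2) * ∑ p, ip (br η (A (br ζ (B (wedgeBasis p))))) (wedgeBasis p)

lemma sharpForm_eq_sharpPairing (R : sk n →ₗ[ℝ] sk n) (η : sk n) :
    sharpForm R η = sharpPairing R R η η := by
  rw [sharpForm, sum_ite_lt_eq_sum_subtype]
  rfl

lemma sharpForm_add (R₁ R₂ : sk n →ₗ[ℝ] sk n) (η : sk n) :
    sharpForm (R₁ + R₂) η = sharpForm R₁ η + sharpForm R₂ η
      + sharpPairing R₁ R₂ η η + sharpPairing R₂ R₁ η η := by
  simp only [sharpForm_eq_sharpPairing, sharpPairing, LinearMap.add_apply, map_add, br_add_right,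
    ip_add_left, Finset.sum_add_distrib]
  ring

lemma sharpPairing_add_add (A B : sk n →ₗ[ℝ] sk n) (η ζ : sk n) :
    sharpPairing A B (η + ζ) (η + ζ) = sharpPairing A B η η + sharpPairing A B η ζ
      + sharpPairing A B ζ η + sharpPairing A B ζ ζ := by
  simp only [sharpPairing, br_add_left, map_add, br_add_right, ip_add_left,
    Finset.sum_add_distrib]
  ring

lemma IsSharp.two_mul_ip_apply {R S : sk n →ₗ[ℝ] sk n} (hS : IsSharp R S) (η ζ : sk n) :
    2 * ip (S η) ζ = sharpForm R (η + ζ) - sharpForm R η - sharpForm R ζ := by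
  rw [← hS.2, ← hS.2, ← hS.2, map_add, ip_add_left, ip_add_right, ip_add_right, hS.1 ζ,
    ip_comm ζ]
  ring

lemma ip_sharp_polarization {R₁ R₂ S₁ S₂ S₁₂ : sk n →ₗ[ℝ] sk n}
    (hS₁ : IsSharp R₁ S₁) (hS₂ : IsSharp R₂ S₂) (hS₁₂ : IsSharp (R₁ + R₂) S₁₂) (η ζ : sk n) :
    ip ((S₁₂ - S₁ - S₂) η) ζ = (1 / 2) * (sharpPairing R₁ R₂ η ζ + sharpPairing R₂ R₁ η ζ
      + sharpPairing R₁ R₂ ζ η + sharpPairing R₂ R₁ ζ η) := by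
  have h₁₂ := hS₁₂.two_mul_ip_apply η ζ
  have h₁ := hS₁.two_mul_ip_apply η ζ
  have h₂ := hS₂.two_mul_ip_apply η ζ
  simp only [sharpForm_add, sharpPairing_add_add] at h₁₂
  simp only [LinearMap.sub_apply, ip_sub_left]
  linarith

def structConst (a b d : IncPair n) : ℝ := ip (br (wedgeBasis a) (wedgeBasis b)) (wedgeBasis d)

lemma structConst_swap (a b d : IncPair n) : structConst a b d = -structConst a d b := by
  rw [structConst, ip_br_left, ip_comm, structConst]

lemma structConst_rotate (a b d : IncPair n) : structConst a b d = structConst b d a := by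
  rw [structConst, br_comm, ip_neg_left, ← structConst, structConst_swap, neg_neg]

lemma ip_br_wedgeBasis (a p : IncPair n) (X : sk n) :
    ip (br (wedgeBasis a) X) (wedgeBasis p) = -∑ e, ip X (wedgeBasis e) * structConst a p e := by
  rw [ip_br_left, ip_eq_sum_wedgeBasis]
  rfl

lemma sharpPairing_wedgeBasis {A : sk n →ₗ[ℝ] sk n} (hA : IsSym A) (B : sk n →ₗ[ℝ] sk n)
    (a b : IncPair n) :
    sharpPairing A B (wedgeBasis a) (wedgeBasis b) = -(1 / 2) * ∑ p, ∑ e, ∑ g, ∑ d,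
      structConst a p e * structConst b g d * (opMatrix B d p * opMatrix A g e) := by
  rw [sharpPairing]
  congr 1
  refine Finset.sum_congr rfl fun p _ => ?_
  simp only [ip_br_wedgeBasis, hA.ip_apply_wedgeBasis, ← opMatrix_apply, neg_mul,
    Finset.sum_neg_distrib, neg_neg, Finset.sum_mul]
  exact Finset.sum_congr rfl fun e _ => Finset.sum_congr rfl fun g _ =>
    Finset.sum_congr rfl fun d _ => by ring

lemma sum_sharpPairing_mul {A : sk n →ₗ[ℝ] sk n} (hA : IsSym A) (B : sk n →ₗ[ℝ] sk n)
    (Z : Matrix (IncPair n) (IncPair n) ℝ) :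
    ∑ a, ∑ b, sharpPairing A B (wedgeBasis a) (wedgeBasis b) * Z b a
      = (1 / 2) * thetaContraction structConst Z (opMatrix B) (opMatrix A) := by
  conv_rhs => rw [thetaContraction, Finset.sum_comm]
  simp only [sharpPairing_wedgeBasis hA, Fintype.sum_prod_type, Finset.mul_sum, Finset.sum_mul]
  refine Finset.sum_congr rfl fun a _ => ?_
  rw [← Finset.sum_comm_cycle]
  refine Finset.sum_congr rfl fun p _ => Finset.sum_congr rfl fun e _ =>
    Finset.sum_congr rfl fun b _ => ?_
  rw [Finset.sum_comm]
  exact Finset.sum_congr rfl fun d _ => Finset.sum_congr rfl fun g _ => by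
    rw [structConst_swap b]
    ring

lemma Bpol_eq_smul (X Y SX SY SXY : sk n →ₗ[ℝ] sk n) :
    Bpol X Y SX SY SXY = (1 / 2 : ℝ) • (X ∘ₗ Y + Y ∘ₗ X + (SXY - SX - SY)) := by
  simp only [Bpol, LinearMap.add_comp, LinearMap.comp_add]
  abel_nf

lemma opIp_sharp_polarization {R₁ R₂ R₃ S₁ S₂ S₁₂ : sk n →ₗ[ℝ] sk n}
    (h₁ : IsSym R₁) (h₂ : IsSym R₂) (h₃ : IsSym R₃)
    (hS₁ : IsSharp R₁ S₁) (hS₂ : IsSharp R₂ S₂) (hS₁₂ : IsSharp (R₁ + R₂) S₁₂) :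
    opIp (S₁₂ - S₁ - S₂) R₃
      = thetaContraction structConst (opMatrix R₁) (opMatrix R₂) (opMatrix R₃) := by
  set M₃ := opMatrix R₃
  have hsum : opIp (S₁₂ - S₁ - S₂) R₃
      = ∑ p, ∑ q, ip ((S₁₂ - S₁ - S₂) (wedgeBasis p)) (wedgeBasis q) * M₃ q p := by
    rw [opIp_eq_sum]
    exact Finset.sum_congr rfl fun p _ => ip_eq_sum_wedgeBasis _ _
  have hflip : ∀ {A : sk n →ₗ[ℝ] sk n}, IsSym A → ∀ B : sk n →ₗ[ℝ] sk n,
      ∑ p, ∑ q, sharpPairing A B (wedgeBasis q) (wedgeBasis p) * M₃ q p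
        = (1 / 2) * thetaContraction structConst M₃ (opMatrix B) (opMatrix A) := by
    intro A hA B
    calc _ = ∑ q, ∑ p, sharpPairing A B (wedgeBasis q) (wedgeBasis p) * M₃ᵀ p q :=
          Finset.sum_comm
      _ = _ := by rw [sum_sharpPairing_mul hA, h₃.opMatrix_transpose]
  simp only [hsum, ip_sharp_polarization hS₁ hS₂ hS₁₂, add_mul, Finset.sum_add_distrib,
    mul_assoc, ← Finset.mul_sum, sum_sharpPairing_mul h₁, sum_sharpPairing_mul h₂, hflip h₁,
    hflip h₂]
  rw [thetaContraction_swap _ structConst_swap M₃ (opMatrix R₂),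
    thetaContraction_rotate _ structConst_rotate M₃]
  ring

lemma opIp_Bpol {R₁ R₂ R₃ S₁ S₂ S₁₂ : sk n →ₗ[ℝ] sk n}
    (h₁ : IsSym R₁) (h₂ : IsSym R₂) (h₃ : IsSym R₃)
    (hS₁ : IsSharp R₁ S₁) (hS₂ : IsSharp R₂ S₂) (hS₁₂ : IsSharp (R₁ + R₂) S₁₂) :
    opIp (Bpol R₁ R₂ S₁ S₂ S₁₂) R₃
      = bpolForm structConst (opMatrix R₁) (opMatrix R₂) (opMatrix R₃) := by
  rw [Bpol_eq_smul, opIp_smul_left, opIp_add_left, opIp_add_left, opIp_comp h₁ h₂, opIp_comp h₂ h₁,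
    opIp_sharp_polarization h₁ h₂ h₃ hS₁ hS₂ hS₁₂, bpolForm]
  ring

end SkewSymmetric

/-- The trilinear form (R₁,R₂,R₃) ↦ ⟨B(R₁,R₂), R₃⟩ on algebraic curvature
operators is symmetric in its three entries, where B is the polarization of
Q(R) = R² + R^#. -/
theorem stmt9 (n : ℕ) (R₁ R₂ R₃ : sk n →ₗ[ℝ] sk n)
    (h₁ : IsSym R₁ ∧ Bianchi R₁) (h₂ : IsSym R₂ ∧ Bianchi R₂)
    (h₃ : IsSym R₃ ∧ Bianchi R₃)
    (S₁ S₂ S₃ S₁₂ S₁₃ S₂₃ : sk n →ₗ[ℝ] sk n)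
    (hS₁ : IsSharp R₁ S₁) (hS₂ : IsSharp R₂ S₂) (hS₃ : IsSharp R₃ S₃)
    (hS₁₂ : IsSharp (R₁ + R₂) S₁₂) (hS₁₃ : IsSharp (R₁ + R₃) S₁₃)
    (hS₂₃ : IsSharp (R₂ + R₃) S₂₃) :
    opIp (Bpol R₁ R₂ S₁ S₂ S₁₂) R₃ = opIp (Bpol R₁ R₃ S₁ S₃ S₁₃) R₂ ∧
    opIp (Bpol R₁ R₂ S₁ S₂ S₁₂) R₃ = opIp (Bpol R₂ R₃ S₂ S₃ S₂₃) R₁ := by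
  rw [opIp_Bpol h₁.1 h₂.1 h₃.1 hS₁ hS₂ hS₁₂, opIp_Bpol h₁.1 h₃.1 h₂.1 hS₁ hS₃ hS₁₃,
    opIp_Bpol h₂.1 h₃.1 h₁.1 hS₂ hS₃ hS₂₃]
  exact ⟨bpolForm_swap _ structConst_swap _ _ _, bpolForm_rotate _ structConst_rotate _ _ _⟩
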